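/- arXiv:0802.3523 — 8 statements merged into one kernel-verified Lean document; each statement's English description precedes it below -/
import Mathlib

section
/- Let A, B, C be nonempty finite subsets of an abelian group G with 1 ∈ C. Then either ABC = AB or |ABC| ≥ |A| + |B|. -/
/-!
Write `S = A * B` and pick `c` with `c • S ⊄ S`, say `c * a₀ * b₀ ∉ S`; we show
`#A + #B ≤ #(S ∪ c • S)` by strong induction on `B`. If some `b₀⁻¹ * b` with `b ∈ B` fails to
stabilise `A`, a Dyson e-transform of `(A, B)` keeps `#A + #B` and `a₀, b₀`, shrinks `B` and does
not enlarge `S`. Otherwise all of `b₀⁻¹ • B` stabilises `S`, so the translate `(c * a₀) • B ⊆ c • S`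
misses `S`, and `#S ≥ #A`. Since `1 ∈ C`, `A * B * C ≠ A * B` yields such a `c ∈ C`, and then
`S ∪ c • S ⊆ A * B * C`.
-/

open Pointwise Finset

namespace Finset

variable {G : Type*} [CommGroup G] [DecidableEq G]

lemma smul_finset_eq_of_subset {g : G} {s : Finset G} (h : g • s ⊆ s) : g • s = s :=
  eq_of_subset_of_card_le h (card_smul_finset g s).ge

lemma disjoint_smul_finset_of_forall_smul_eq {s t : Finset G} {x : G}
    (hs : ∀ d ∈ t, d • s = s) (hx : x ∉ s) : Disjoint s (x • t) := by
  rw [disjoint_right]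
  intro y hy hxd
  obtain ⟨d, hd, rfl⟩ := mem_smul_finset.1 hy
  rw [smul_eq_mul, mul_comm, ← smul_eq_mul, ← hs d hd] at hxd
  exact hx (smul_mem_smul_finset_iff d |>.1 hxd)

lemma card_add_card_le_card_union_smul_mul_of_forall_smul_subset {A B : Finset G} {a₀ b₀ c : G}
    (ha₀ : a₀ ∈ A) (hb₀ : b₀ ∈ B) (hx : c * a₀ * b₀ ∉ A * B)
    (hstab : ∀ b ∈ B, (b₀⁻¹ * b) • A ⊆ A) :
    #A + #B ≤ #(A * B ∪ c • (A * B)) := by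
  have hdisj : Disjoint (A * B) ((c * a₀ * b₀) • (b₀⁻¹ • B)) := by
    refine disjoint_smul_finset_of_forall_smul_eq ?_ hx
    intro d hd
    obtain ⟨b, hb, rfl⟩ := mem_smul_finset.1 hd
    rw [smul_eq_mul, ← smul_mul_assoc, smul_finset_eq_of_subset (hstab b hb)]
  have hsub : (c * a₀ * b₀) • (b₀⁻¹ • B) ⊆ c • (A * B) := by
    rw [smul_smul, mul_inv_cancel_right, mul_smul]
    exact smul_finset_subset_smul_finset (smul_finset_subset_mul ha₀)
  have hA : #A ≤ #(A * B) := card_le_card_mul_right ⟨b₀, hb₀⟩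
  calc #A + #B ≤ #(A * B) + #((c * a₀ * b₀) • (b₀⁻¹ • B)) := by
        rw [card_smul_finset, card_smul_finset]; omega
    _ = #(A * B ∪ (c * a₀ * b₀) • (b₀⁻¹ • B)) := (card_union_of_disjoint hdisj).symm
    _ ≤ #(A * B ∪ c • (A * B)) := card_le_card (union_subset_union_right hsub)

theorem card_add_card_le_card_union_smul_mul {c : G} (A B : Finset G)
    (hc : ¬c • (A * B) ⊆ A * B) : #A + #B ≤ #(A * B ∪ c • (A * B)) := by
  induction B using strongInduction generalizing A with
  | H B ih =>
  obtain ⟨x, hxc, hx⟩ := not_subset.1 hc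
  obtain ⟨_, hab, rfl⟩ := mem_smul_finset.1 hxc
  obtain ⟨a₀, ha₀, b₀, hb₀, rfl⟩ := mem_mul.1 hab
  rw [smul_eq_mul, ← mul_assoc] at hx
  by_cases hstab : ∀ b ∈ B, (b₀⁻¹ * b) • A ⊆ A
  · exact card_add_card_le_card_union_smul_mul_of_forall_smul_subset ha₀ hb₀ hx hstab
  push Not at hstab
  obtain ⟨b, hb, hbA⟩ := hstab
  obtain ⟨_, ha₁', ha₁A⟩ := not_subset.1 hbA
  obtain ⟨a₁, ha₁, rfl⟩ := mem_smul_finset.1 ha₁'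
  set e := a₁ * b₀⁻¹
  set D := mulDysonETransform e (A, B)
  have hb₀D : b₀ ∈ D.2 := mem_inter.2 ⟨hb₀, mem_inv_smul_finset_iff.2 (by simpa [e])⟩
  have hbD : b ∉ D.2 := fun h ↦ ha₁A <| by
    simpa [e, smul_eq_mul, mul_comm, mul_left_comm] using
      mem_inv_smul_finset_iff.1 (mem_inter.1 h).2
  have hDB : D.2 ⊂ B :=
    ssubset_of_subset_of_ne inter_subset_left (ne_of_mem_of_not_mem' hb hbD).symm
  have hDc : ¬c • (D.1 * D.2) ⊆ D.1 * D.2 := by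
    have h₀ : a₀ * b₀ ∈ D.1 * D.2 := mul_mem_mul (mem_union_left _ ha₀) hb₀D
    refine fun h ↦ hx (mulDysonETransform.subset e (A, B) ?_)
    simpa only [smul_eq_mul, mul_assoc] using h (smul_mem_smul_finset h₀)
  calc #A + #B = #D.1 + #D.2 := (mulDysonETransform.card e (A, B)).symm
    _ ≤ #(D.1 * D.2 ∪ c • (D.1 * D.2)) := ih D.2 hDB D.1 hDc
    _ ≤ #(A * B ∪ c • (A * B)) := by
      have := mulDysonETransform.subset e (A, B)
      exact card_le_card (union_subset_union this (smul_finset_subset_smul_finset this))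

end Finset

theorem stmt_2_general {G : Type*} [CommGroup G] [DecidableEq G]
    (A B C : Finset G) (h1 : (1 : G) ∈ C) :
    A * B * C = A * B ∨ A.card + B.card ≤ (A * B * C).card := by
  have hsub : A * B ⊆ A * B * C := subset_mul_left _ h1
  refine or_iff_not_imp_left.2 fun hne ↦ ?_
  obtain ⟨x, hxABC, hx⟩ := not_subset.1 fun h ↦ hne (h.antisymm hsub)
  obtain ⟨s, hs, c, hc, rfl⟩ := mem_mul.1 hxABC
  have hc' : ¬c • (A * B) ⊆ A * B := fun h ↦ hx (mul_comm c s ▸ h (smul_mem_smul_finset hs))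
  refine (card_add_card_le_card_union_smul_mul A B hc').trans (card_le_card ?_)
  exact union_subset hsub ((smul_finset_subset_mul hc).trans_eq (mul_comm _ _))

theorem stmt_2 {G : Type*} [CommGroup G] [DecidableEq G]
    (A B C : Finset G) (hA : A.Nonempty) (hB : B.Nonempty) (hC : C.Nonempty)
    (h1 : (1 : G) ∈ C) :
    A * B * C = A * B ∨ A.card + B.card ≤ (A * B * C).card :=
  stmt_2_general A B C h1
end

section
/- Let K ⊆ L be a field extension with K in the center of L, let A, B be finite-dimensional K-subspaces of L, and let x ∈ L be nonzero. Set A' = A + Ax and B' = B ∩ x⁻¹B. Then the K-span of A'B' is contained in the K-span of AB. -/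
theorem Submodule.map_mulRight_mul_map_mulLeft_le {R A : Type*} [CommSemiring R] [Semiring A]
    [Algebra R A] (M N : Submodule R A) {x y : A} (hxy : x * y = 1) :
    M.map (LinearMap.mulRight R x) * N.map (LinearMap.mulLeft R y) ≤ M * N := by
  refine Submodule.mul_le.2 ?_
  rintro _ ⟨m, hm, rfl⟩ _ ⟨n, hn, rfl⟩
  simpa only [LinearMap.mulRight_apply, LinearMap.mulLeft_apply, mul_assoc, ← mul_assoc x, hxy,
    one_mul] using Submodule.mul_mem_mul hm hn

theorem stmt_3_general {K L : Type*} [Field K] [DivisionRing L] [Algebra K L]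
    (A B : Submodule K L)
    (x : L) (hx : x ≠ 0) :
    (A ⊔ A.map (LinearMap.mulRight K x)) * (B ⊓ B.map (LinearMap.mulLeft K x⁻¹)) ≤ A * B := by
  rw [Submodule.sup_mul]
  exact sup_le (mul_le_mul' le_rfl inf_le_left)
    ((mul_le_mul' le_rfl inf_le_right).trans
      (A.map_mulRight_mul_map_mulLeft_le B (mul_inv_cancel₀ hx)))

theorem stmt_3 {K L : Type*} [Field K] [DivisionRing L] [Algebra K L]
    (A B : Submodule K L) (hA : FiniteDimensional K A) (hB : FiniteDimensional K B)
    (x : L) (hx : x ≠ 0) :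
    (A ⊔ A.map (LinearMap.mulRight K x)) * (B ⊓ B.map (LinearMap.mulLeft K x⁻¹)) ≤ A * B :=
  stmt_3_general A B x hx
end

section
/- Let K be a commutative field and L a purely transcendental (more precisely: containing no finite-dimensional subfield other than K) field extension of K containing K in its center. Then for any nonzero finite-dimensional K-subspaces A, B of L, dim_K⟨AB⟩ ≥ dim_K A + dim_K B − 1. -/
/-!
Kemperman's transforms: for `u ≠ 0` both `(A + Au, B ∩ u⁻¹B)` and `(A ∩ Au⁻¹, B + uB)` have
their product inside `AB`, and their total dimensions add up to `2 (dim A + dim B)`, so one of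
them does not lose total dimension. Taking `u = b₁ b₀⁻¹` for independent `b₀, b₁` in the smaller
factor, say `B`, the hypothesis on `L` forbids `uB ⊆ B`: the stabilisers `{h | hX ⊆ X}` and
`{h | Xh ⊆ X}` of a nonzero finite-dimensional `X` are finite-dimensional subalgebras, hence `K`
(here `u ∈ K` would make `b₀, b₁` dependent). So either the first transform strictly shrinks `B`
without losing total dimension, or the second strictly gains total dimension (and `dim B ≤ dim A`
keeps `A ∩ Au⁻¹ ≠ 0`). Induction on `(2 dim AB - dim A - dim B, min (dim A) (dim B))`,
lexicographically, then gives the bound, which is trivial when one factor is one-dimensional.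
-/

open Module Submodule

def NoFiniteSubfield (K L : Type*) [Field K] [DivisionRing L] [Algebra K L] : Prop :=
  ∀ H : Submodule K L, (1 : L) ∈ H → (∀ a ∈ H, ∀ b ∈ H, a * b ∈ H) →
    FiniteDimensional K H → H = (1 : Submodule K L)

section Semiring

variable {K L : Type*} [CommSemiring K] [Semiring L] [Algebra K L]

theorem sup_map_mulRight_mul_inf_comap_mulLeft_le (A B : Submodule K L) (u : L) :
    (A ⊔ A.map (LinearMap.mulRight K u)) * (B ⊓ B.comap (LinearMap.mulLeft K u)) ≤ A * B := by
  refine mul_le.2 fun x hx y hy => ?_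
  obtain ⟨a, ha, _, ⟨a', ha', rfl⟩, rfl⟩ := mem_sup.1 hx
  obtain ⟨hy, huy : u * y ∈ B⟩ := mem_inf.1 hy
  rw [LinearMap.mulRight_apply, add_mul, mul_assoc]
  exact add_mem (mul_mem_mul ha hy) (mul_mem_mul ha' huy)

theorem inf_comap_mulRight_mul_sup_map_mulLeft_le (A B : Submodule K L) (u : L) :
    (A ⊓ A.comap (LinearMap.mulRight K u)) * (B ⊔ B.map (LinearMap.mulLeft K u)) ≤ A * B := by
  refine mul_le.2 fun x hx y hy => ?_
  obtain ⟨hx, hxu : x * u ∈ A⟩ := mem_inf.1 hx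
  obtain ⟨b, hb, _, ⟨b', hb', rfl⟩, rfl⟩ := mem_sup.1 hy
  rw [LinearMap.mulLeft_apply, mul_add, ← mul_assoc]
  exact add_mem (mul_mem_mul hx hb) (mul_mem_mul hxu hb')

end Semiring

section VectorSpace

variable {K V : Type*} [Field K] [AddCommGroup V] [Module K V]

theorem finrank_map_eq_of_injective {φ : V →ₗ[K] V} (hφ : Function.Injective φ)
    (A : Submodule K V) : finrank K (A.map φ) = finrank K A :=
  (equivMapOfInjective φ hφ A).finrank_eq.symm

theorem finrank_sup_map_add_finrank_inf_comap {φ : V →ₗ[K] V} (hφ : Function.Injective φ)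
    (A : Submodule K V) [FiniteDimensional K A] :
    finrank K ↥(A ⊔ A.map φ) + finrank K ↥(A ⊓ A.comap φ) = 2 * finrank K A := by
  have hinf : (A ⊓ A.comap φ).map φ = A ⊓ A.map φ := by
    rw [map_inf φ hφ, map_comap_eq, inf_left_comm, ← inf_assoc,
      inf_of_le_right LinearMap.map_le_range, inf_comm]
  rw [← finrank_map_eq_of_injective hφ (A ⊓ A.comap φ), hinf, finrank_sup_add_finrank_inf_eq,
    finrank_map_eq_of_injective hφ]
  ring

theorem exists_mem_notMem_span_singleton {X : Submodule K V} [FiniteDimensional K X]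
    (hX : 2 ≤ finrank K X) : ∃ x₀ ∈ X, x₀ ≠ 0 ∧ ∃ x₁ ∈ X, x₁ ∉ K ∙ x₀ := by
  obtain ⟨x₀, hx₀, hx₀0⟩ := exists_mem_ne_zero_of_ne_bot
    ((one_le_finrank_iff (S := X)).1 (by omega))
  have hlt : K ∙ x₀ < X := lt_of_le_of_ne ((span_singleton_le_iff_mem _ _).2 hx₀) fun h => by
    have := finrank_span_singleton (K := K) hx₀0
    rw [h] at this
    omega
  obtain ⟨x₁, hx₁, hx₁'⟩ := SetLike.exists_of_lt hlt
  exact ⟨x₀, hx₀, hx₀0, x₁, hx₁, hx₁'⟩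

end VectorSpace

section DivisionRing

variable {K L : Type*} [Field K] [DivisionRing L] [Algebra K L]

instance Submodule.finiteDimensional_mul (A B : Submodule K L) [FiniteDimensional K A]
    [FiniteDimensional K B] : FiniteDimensional K ↥(A * B) :=
  Module.Finite.iff_fg.2 ((Module.Finite.iff_fg.1 ‹_›).mul (Module.Finite.iff_fg.1 ‹_›))

theorem LinearMap.mulLeft_injective {u : L} (hu : u ≠ 0) :
    Function.Injective (LinearMap.mulLeft K u) :=
  mul_right_injective₀ hu

theorem LinearMap.mulRight_injective {u : L} (hu : u ≠ 0) :
    Function.Injective (LinearMap.mulRight K u) :=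
  mul_left_injective₀ hu

theorem finrank_left_le_finrank_mul (A : Submodule K L) {B : Submodule K L} (hB : B ≠ ⊥)
    [FiniteDimensional K A] [FiniteDimensional K B] :
    finrank K A ≤ finrank K ↥(A * B) := by
  obtain ⟨b, hb, hb0⟩ := exists_mem_ne_zero_of_ne_bot hB
  rw [← finrank_map_eq_of_injective (LinearMap.mulRight_injective (K := K) hb0) A]
  exact finrank_mono (map_le_iff_le_comap.2 fun a ha => mul_mem_mul ha hb)

theorem finrank_right_le_finrank_mul {A : Submodule K L} (B : Submodule K L) (hA : A ≠ ⊥)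
    [FiniteDimensional K A] [FiniteDimensional K B] :
    finrank K B ≤ finrank K ↥(A * B) := by
  obtain ⟨a, ha, ha0⟩ := exists_mem_ne_zero_of_ne_bot hA
  rw [← finrank_map_eq_of_injective (LinearMap.mulLeft_injective (K := K) ha0) B]
  exact finrank_mono (map_le_iff_le_comap.2 fun b hb => mul_mem_mul ha hb)

theorem mem_one_of_le_comap_mulRight (hL : NoFiniteSubfield K L) {X : Submodule K L}
    (hX : X ≠ ⊥) [FiniteDimensional K X] {u : L} (hu : X ≤ X.comap (LinearMap.mulRight K u)) :
    u ∈ (1 : Submodule K L) := by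
  obtain ⟨x₀, hx₀, hx₀0⟩ := exists_mem_ne_zero_of_ne_bot hX
  let H : Submodule K L := ⨅ x ∈ X, X.comap (LinearMap.mulLeft K x)
  have mem_H {h : L} : h ∈ H ↔ ∀ x ∈ X, x * h ∈ X := by simp [H]
  have : FiniteDimensional K (H.map (LinearMap.mulLeft K x₀)) :=
    finiteDimensional_of_le (map_le_iff_le_comap.2 fun h hh => mem_H.1 hh x₀ hx₀)
  have hH : H = 1 := hL H (mem_H.2 fun x hx => by rwa [mul_one])
    (fun a ha b hb => mem_H.2 fun x hx => by
      rw [← mul_assoc]; exact mem_H.1 hb _ (mem_H.1 ha x hx))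
    (equivMapOfInjective _ (LinearMap.mulLeft_injective hx₀0) H).symm.finiteDimensional
  exact hH ▸ mem_H.2 hu

theorem mem_one_of_le_comap_mulLeft (hL : NoFiniteSubfield K L) {X : Submodule K L}
    (hX : X ≠ ⊥) [FiniteDimensional K X] {u : L} (hu : X ≤ X.comap (LinearMap.mulLeft K u)) :
    u ∈ (1 : Submodule K L) := by
  obtain ⟨x₀, hx₀, hx₀0⟩ := exists_mem_ne_zero_of_ne_bot hX
  let H : Submodule K L := ⨅ x ∈ X, X.comap (LinearMap.mulRight K x)
  have mem_H {h : L} : h ∈ H ↔ ∀ x ∈ X, h * x ∈ X := by simp [H]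
  have : FiniteDimensional K (H.map (LinearMap.mulRight K x₀)) :=
    finiteDimensional_of_le (map_le_iff_le_comap.2 fun h hh => mem_H.1 hh x₀ hx₀)
  have hH : H = 1 := hL H (mem_H.2 fun x hx => by rwa [one_mul])
    (fun a ha b hb => mem_H.2 fun x hx => by
      rw [mul_assoc]; exact mem_H.1 ha _ (mem_H.1 hb x hx))
    (equivMapOfInjective _ (LinearMap.mulRight_injective hx₀0) H).symm.finiteDimensional
  exact hH ▸ mem_H.2 hu

theorem exists_inf_comap_mulLeft_lt (hL : NoFiniteSubfield K L) {B : Submodule K L}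
    [FiniteDimensional K B] (hB : 2 ≤ finrank K B) :
    ∃ u ≠ 0, B ⊓ B.comap (LinearMap.mulLeft K u) ≠ ⊥ ∧
      B ⊓ B.comap (LinearMap.mulLeft K u) < B := by
  obtain ⟨b₀, hb₀, hb₀0, b₁, hb₁, hb₁'⟩ := exists_mem_notMem_span_singleton hB
  have hb₁0 : b₁ ≠ 0 := fun h => hb₁' (h ▸ zero_mem _)
  have hub₀ : b₁ * b₀⁻¹ * b₀ = b₁ := inv_mul_cancel_right₀ hb₀0 b₁
  refine ⟨b₁ * b₀⁻¹, mul_ne_zero hb₁0 (inv_ne_zero hb₀0), ?_, inf_le_left.lt_of_ne fun h => ?_⟩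
  · exact (Submodule.ne_bot_iff _).2 ⟨b₀, ⟨hb₀, show _ * b₀ ∈ B by rwa [hub₀]⟩, hb₀0⟩
  · obtain ⟨k, hk⟩ := mem_one.1 (mem_one_of_le_comap_mulLeft hL
      ((Submodule.ne_bot_iff _).2 ⟨b₀, hb₀, hb₀0⟩) (inf_eq_left.1 h))
    exact hb₁' (mem_span_singleton.2 ⟨k, by rw [Algebra.smul_def, hk, hub₀]⟩)

theorem exists_inf_comap_mulRight_lt (hL : NoFiniteSubfield K L) {A : Submodule K L}
    [FiniteDimensional K A] (hA : 2 ≤ finrank K A) :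
    ∃ u ≠ 0, A ⊓ A.comap (LinearMap.mulRight K u) ≠ ⊥ ∧
      A ⊓ A.comap (LinearMap.mulRight K u) < A := by
  obtain ⟨a₀, ha₀, ha₀0, a₁, ha₁, ha₁'⟩ := exists_mem_notMem_span_singleton hA
  have ha₁0 : a₁ ≠ 0 := fun h => ha₁' (h ▸ zero_mem _)
  have ha₀u : a₀ * (a₀⁻¹ * a₁) = a₁ := mul_inv_cancel_left₀ ha₀0 a₁
  refine ⟨a₀⁻¹ * a₁, mul_ne_zero (inv_ne_zero ha₀0) ha₁0, ?_, inf_le_left.lt_of_ne fun h => ?_⟩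
  · exact (Submodule.ne_bot_iff _).2 ⟨a₀, ⟨ha₀, show a₀ * _ ∈ A by rwa [ha₀u]⟩, ha₀0⟩
  · obtain ⟨k, hk⟩ := mem_one.1 (mem_one_of_le_comap_mulRight hL
      ((Submodule.ne_bot_iff _).2 ⟨a₀, ha₀, ha₀0⟩) (inf_eq_left.1 h))
    exact ha₁' (mem_span_singleton.2
      ⟨k, by rw [Algebra.smul_def, Algebra.commutes, hk, ha₀u]⟩)

theorem exists_kemperman_transform (hL : NoFiniteSubfield K L) {A B : Submodule K L}
    [FiniteDimensional K A] [FiniteDimensional K B] (hA : 2 ≤ finrank K A) (hB : 2 ≤ finrank K B) :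
    ∃ A' B' : Submodule K L, A' ≠ ⊥ ∧ B' ≠ ⊥ ∧ FiniteDimensional K A' ∧ FiniteDimensional K B' ∧
      A' * B' ≤ A * B ∧
      (finrank K A + finrank K B < finrank K A' + finrank K B' ∨
        finrank K A + finrank K B ≤ finrank K A' + finrank K B' ∧
          min (finrank K A') (finrank K B') < min (finrank K A) (finrank K B)) := by
  have hA0 : A ≠ ⊥ := (one_le_finrank_iff (S := A)).1 (by omega)
  have hB0 : B ≠ ⊥ := (one_le_finrank_iff (S := B)).1 (by omega)
  rcases le_or_gt (finrank K B) (finrank K A) with hBA | hAB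
  · obtain ⟨u, hu, hne, hlt⟩ := exists_inf_comap_mulLeft_lt hL hB
    have hdimA :=
      finrank_sup_map_add_finrank_inf_comap (LinearMap.mulRight_injective (K := K) hu) A
    have hdimB :=
      finrank_sup_map_add_finrank_inf_comap (LinearMap.mulLeft_injective (K := K) hu) B
    have hshrink := finrank_lt_finrank_of_lt hlt
    by_cases hsum : finrank K A + finrank K B ≤
        finrank K ↥(A ⊔ A.map (LinearMap.mulRight K u)) +
          finrank K ↥(B ⊓ B.comap (LinearMap.mulLeft K u))
    · exact ⟨_, _, ne_bot_of_le_ne_bot hA0 le_sup_left, hne, inferInstance, inferInstance,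
        sup_map_mulRight_mul_inf_comap_mulLeft_le A B u, Or.inr ⟨hsum, by omega⟩⟩
    · have hne' : A ⊓ A.comap (LinearMap.mulRight K u) ≠ ⊥ := by
        intro h
        rw [h, finrank_bot] at hdimA
        omega
      exact ⟨_, _, hne', ne_bot_of_le_ne_bot hB0 le_sup_left, inferInstance, inferInstance,
        inf_comap_mulRight_mul_sup_map_mulLeft_le A B u, Or.inl (by omega)⟩
  · obtain ⟨u, hu, hne, hlt⟩ := exists_inf_comap_mulRight_lt hL hA
    have hdimA :=
      finrank_sup_map_add_finrank_inf_comap (LinearMap.mulRight_injective (K := K) hu) A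
    have hdimB :=
      finrank_sup_map_add_finrank_inf_comap (LinearMap.mulLeft_injective (K := K) hu) B
    have hshrink := finrank_lt_finrank_of_lt hlt
    by_cases hsum : finrank K A + finrank K B ≤
        finrank K ↥(A ⊓ A.comap (LinearMap.mulRight K u)) +
          finrank K ↥(B ⊔ B.map (LinearMap.mulLeft K u))
    · exact ⟨_, _, hne, ne_bot_of_le_ne_bot hB0 le_sup_left, inferInstance, inferInstance,
        inf_comap_mulRight_mul_sup_map_mulLeft_le A B u, Or.inr ⟨hsum, by omega⟩⟩
    · have hne' : B ⊓ B.comap (LinearMap.mulLeft K u) ≠ ⊥ := by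
        intro h
        rw [h, finrank_bot] at hdimB
        omega
      exact ⟨_, _, ne_bot_of_le_ne_bot hA0 le_sup_left, hne', inferInstance, inferInstance,
        sup_map_mulRight_mul_inf_comap_mulLeft_le A B u, Or.inl (by omega)⟩

theorem finrank_add_finrank_le_finrank_mul_add_one (hL : NoFiniteSubfield K L)
    {A B : Submodule K L} (hA : A ≠ ⊥) (hB : B ≠ ⊥) [FiniteDimensional K A]
    [FiniteDimensional K B] :
    finrank K A + finrank K B ≤ finrank K ↥(A * B) + 1 := by
  have hAAB := finrank_left_le_finrank_mul A hB
  have hBAB := finrank_right_le_finrank_mul B hA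
  by_contra! hlt
  obtain ⟨A', B', hA', hB', _, _, hle, hdesc⟩ :=
    exists_kemperman_transform hL (A := A) (B := B) (by omega) (by omega)
  have hprod := finrank_mono hle
  have := finrank_add_finrank_le_finrank_mul_add_one hL hA' hB'
  omega
termination_by
  (2 * finrank K ↥(A * B) - (finrank K A + finrank K B), min (finrank K A) (finrank K B))
decreasing_by
  have := finrank_left_le_finrank_mul A' hB'
  have := finrank_right_le_finrank_mul B' hA'
  rw [Prod.lex_def]
  omega

end DivisionRing

/-- Linear version of Kemperman's theorem for torsion-free groups:
if the only finite-dimensional subfield of `L` containing `K` is `K` itself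
(e.g. `L` purely transcendental over `K`), then
`dim ⟨AB⟩ ≥ dim A + dim B - 1`. -/
theorem stmt_6 {K L : Type*} [Field K] [DivisionRing L] [Algebra K L]
    (htrans : ∀ H : Submodule K L, (1 : L) ∈ H → (∀ a ∈ H, ∀ b ∈ H, a * b ∈ H) →
      FiniteDimensional K H → H = (1 : Submodule K L))
    (A B : Submodule K L) (hA : A ≠ ⊥) (hB : B ≠ ⊥)
    (hAfin : FiniteDimensional K A) (hBfin : FiniteDimensional K B) :
    Module.finrank K A + Module.finrank K B ≤ Module.finrank K ↥(A * B) + 1 :=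
  finrank_add_finrank_le_finrank_mul_add_one htrans hA hB
end

section
/- Let K be a commutative field and L a field extension containing K in its center with dim_K L finite. If A, B are nonzero K-subspaces of L with dim_K A + dim_K B > dim_K L, then the K-span of AB equals L. -/
/-!
If `A * B` were a proper subspace of `L`, some nonzero functional `f` would vanish on it. Since
`L` is a division ring, `y ↦ (x ↦ f (x * y))` embeds `L` into its dual, and it sends `B` into the
annihilator of `A`; hence `dim B ≤ dim L - dim A`.
-/

open Module

theorem LinearMap.injective_flip_mul_compr₂ {K L : Type*} [CommSemiring K] [DivisionRing L]
    [Algebra K L] {f : Dual K L} (hf : f ≠ 0) :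
    Function.Injective ((LinearMap.mul K L).flip.compr₂ f) := by
  rw [injective_iff_map_eq_zero]
  intro y hy
  by_contra hy0
  obtain ⟨z, hz⟩ := DFunLike.ne_iff.mp hf
  have hzy : f (z * y⁻¹ * y) = 0 := LinearMap.congr_fun hy (z * y⁻¹)
  rw [inv_mul_cancel_right₀ hy0] at hzy
  exact hz hzy

theorem Submodule.finrank_add_finrank_le_of_mul_le_ker {K L : Type*} [Field K] [DivisionRing L]
    [Algebra K L] [FiniteDimensional K L] {A B : Submodule K L} {f : Dual K L} (hf : f ≠ 0)
    (hAB : A * B ≤ LinearMap.ker f) :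
    finrank K A + finrank K B ≤ finrank K L := by
  set ψ := (LinearMap.mul K L).flip.compr₂ f
  have hψB : B.map ψ ≤ A.dualAnnihilator := by
    rintro _ ⟨b, hb, rfl⟩
    exact (mem_dualAnnihilator _).mpr fun a ha => hAB (mul_mem_mul ha hb)
  calc finrank K A + finrank K B
      = finrank K A + finrank K (B.map ψ) := by
        rw [(B.equivMapOfInjective ψ (LinearMap.injective_flip_mul_compr₂ hf)).finrank_eq]
    _ ≤ finrank K A + finrank K A.dualAnnihilator := by grw [finrank_mono hψB]
    _ = finrank K L := Subspace.finrank_add_finrank_dualAnnihilator_eq A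

theorem stmt_8_general {K L : Type*} [Field K] [DivisionRing L] [Algebra K L]
    [FiniteDimensional K L]
    (A B : Submodule K L)
    (h : Module.finrank K L < Module.finrank K A + Module.finrank K B) :
    A * B = ⊤ := by
  by_contra hne
  obtain ⟨f, hf, hAB⟩ := (A * B).exists_le_ker_of_lt_top (lt_top_iff_ne_top.mpr hne)
  exact h.not_ge (Submodule.finrank_add_finrank_le_of_mul_le_ker hf hAB)

theorem stmt_8 {K L : Type*} [Field K] [DivisionRing L] [Algebra K L]
    [FiniteDimensional K L]
    (A B : Submodule K L) (hA : A ≠ ⊥) (hB : B ≠ ⊥)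
    (h : Module.finrank K L < Module.finrank K A + Module.finrank K B) :
    A * B = ⊤ :=
  stmt_8_general A B h
end

section
/- Let K ⊆ L be a commutative field extension with dim_K L finite. If A, B are nonzero K-subspaces of L with dim_K A + dim_K B > dim_K L, then ⟨AB⟩ = L. -/
/-!
If `A * B` were a proper subspace, some nonzero linear form `f` on `L` would vanish on it. Since `L`
is a division ring, `y ↦ (x ↦ f (x * y))` is injective, hence (comparing dimensions) an isomorphism
`L ≃ Dual K L`; restricting the forms to `A` therefore gives a surjection `L → Dual K A` whose
kernel contains `B`. Rank–nullity then yields `dim A + dim B ≤ dim L`.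
-/

open Module LinearMap

section

variable {K L : Type*} [Field K] [DivisionRing L] [Algebra K L]

theorem injective_mul_flip_compr₂_of_ne_zero {f : Dual K L} (hf : f ≠ 0) :
    Function.Injective ((LinearMap.mul K L).flip.compr₂ f) := by
  rw [← ker_eq_bot, Submodule.eq_bot_iff]
  intro y hy
  by_contra hy0
  refine hf (LinearMap.ext fun z => ?_)
  simpa [mul_assoc, inv_mul_cancel₀ hy0] using LinearMap.congr_fun (mem_ker.mp hy) (z * y⁻¹)

theorem surjective_mul_flip_compr₂_of_ne_zero [FiniteDimensional K L] {f : Dual K L}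
    (hf : f ≠ 0) : Function.Surjective ((LinearMap.mul K L).flip.compr₂ f) :=
  (injective_iff_surjective_of_finrank_eq_finrank Subspace.dual_finrank_eq.symm).mp
    (injective_mul_flip_compr₂_of_ne_zero hf)

theorem finrank_add_finrank_le_of_mul_ne_top [FiniteDimensional K L] {A B : Submodule K L}
    (hAB : A * B ≠ ⊤) : finrank K A + finrank K B ≤ finrank K L := by
  obtain ⟨f, hf, hfAB⟩ := (A * B).exists_dual_map_eq_bot_of_lt_top hAB.lt_top inferInstance
  set T := A.subtype.dualMap ∘ₗ (LinearMap.mul K L).flip.compr₂ f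
  have hT : range T = ⊤ := range_eq_top.mpr <|
    (dualMap_surjective_of_injective A.injective_subtype).comp
      (surjective_mul_flip_compr₂_of_ne_zero hf)
  have hBT : B ≤ ker T := fun b hb => LinearMap.ext fun a =>
    le_ker_iff_map.mpr hfAB (Submodule.mul_mem_mul a.2 hb)
  calc finrank K A + finrank K B ≤ finrank K (range T) + finrank K (ker T) := by
        rw [hT, finrank_top, Subspace.dual_finrank_eq]
        exact Nat.add_le_add_left (Submodule.finrank_mono hBT) _
    _ = finrank K L := finrank_range_add_finrank_ker T

end

theorem stmt_9_general {K L : Type*} [Field K] [Field L] [Algebra K L]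
    [FiniteDimensional K L]
    (A B : Submodule K L)
    (h : Module.finrank K L < Module.finrank K A + Module.finrank K B) :
    A * B = ⊤ := by
  by_contra hAB
  exact (finrank_add_finrank_le_of_mul_ne_top hAB).not_gt h

theorem stmt_9 {K L : Type*} [Field K] [Field L] [Algebra K L]
    [FiniteDimensional K L]
    (A B : Submodule K L) (hA : A ≠ ⊥) (hB : B ≠ ⊥)
    (h : Module.finrank K L < Module.finrank K A + Module.finrank K B) :
    A * B = ⊤ :=
  stmt_9_general A B h
end

section
/- Let K be a commutative field, H a field with K ⊆ H ⊆ L where L is a field extension, and let V be a nonzero finite-dimensional K-subspace of L with HV = V. Then dim_K H is finite and divides dim_K V; indeed V is a direct sum of finitely many subspaces of the form Hv with v ∈ V nonzero. -/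
/-!
Since `H * V = V`, the space `V` is a vector space over the field `H`. The tower law
`dim_K V = dim_K H * dim_H V` then gives finiteness of `H` over `K` and the divisibility, and an
`H`-basis `R` of `V` splits `V` into the direct sum of the lines `H v`, `v ∈ R`.
-/

open Pointwise

theorem iSupIndep.map_completeLatticeHom {ι : Sort*} {α β : Type*} [CompleteLattice α]
    [CompleteLattice β] {t : ι → α} (ht : iSupIndep t) (f : CompleteLatticeHom α β) :
    iSupIndep (f ∘ t) := fun i => by
  simpa only [Function.comp_apply, map_iSup] using (ht i).map f

namespace Submodule

variable {R S M : Type*} [Semiring R] [Semiring S] [AddCommMonoid M] [Module R M] [Module S M]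
  [SMul R S] [IsScalarTower R S M]

theorem iSupIndep_restrictScalars {ι : Sort*} {p : ι → Submodule S M} (hp : iSupIndep p) :
    iSupIndep fun i => (p i).restrictScalars R :=
  hp.map_completeLatticeHom (restrictScalarsLatticeHom R S M)

def extendScalarsOfSMulMem (V : Submodule R M) (hV : ∀ (s : S) (v : M), v ∈ V → s • v ∈ V) :
    Submodule S M where
  toAddSubmonoid := V.toAddSubmonoid
  smul_mem' := hV

@[simp]
theorem restrictScalars_extendScalarsOfSMulMem (V : Submodule R M)
    (hV : ∀ (s : S) (v : M), v ∈ V → s • v ∈ V) :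
    (V.extendScalarsOfSMulMem hV).restrictScalars R = V := rfl

end Submodule

section
variable {K S M : Type*} [Field K] [DivisionRing S] [Algebra K S] [AddCommGroup M] [Module K M]
  [Module S M] [IsScalarTower K S M]

def Submodule.restrictScalarsLinearEquiv (W : Submodule S M) : W.restrictScalars K ≃ₗ[K] W :=
  { AddEquiv.refl W with map_smul' := fun _ _ => rfl }

instance Submodule.finiteDimensional_of_restrictScalars (W : Submodule S M)
    [FiniteDimensional K (W.restrictScalars K)] : FiniteDimensional K W :=
  Module.Finite.equiv W.restrictScalarsLinearEquiv

theorem Submodule.finiteDimensional_of_nontrivial (W : Submodule S M) [Nontrivial W]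
    [FiniteDimensional K W] : FiniteDimensional K S :=
  Module.Finite.left K S W

theorem Submodule.finrank_dvd_finrank_restrictScalars (W : Submodule S M) :
    Module.finrank K S ∣ Module.finrank K (W.restrictScalars K) := by
  rw [W.restrictScalarsLinearEquiv.finrank_eq]
  exact Module.finrank_dvd_finrank_right K S W

end

theorem Submodule.exists_finset_iSupIndep_span_singleton {D M : Type*} [DivisionRing D]
    [AddCommGroup M] [Module D M] (W : Submodule D M) [FiniteDimensional D W] :
    ∃ R : Finset M, (∀ v ∈ R, v ∈ W ∧ v ≠ 0) ∧
      iSupIndep (fun v : R => span D {(v : M)}) ∧ ⨆ v : R, span D {(v : M)} = W := by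
  obtain ⟨b, hbW, hspan, hli⟩ := exists_linearIndependent D (W : Set M)
  have : Finite b := (LinearIndependent.of_comp W.subtype
    (v := fun x : b => (⟨x, hbW x.2⟩ : W)) hli).finite
  lift b to Finset M using b.toFinite
  refine ⟨b, fun v hv => ⟨hbW hv, hli.ne_zero ⟨v, hv⟩⟩, hli.iSupIndep_span_singleton, ?_⟩
  rw [← span_range_eq_iSup, Subtype.range_coe, hspan, span_eq]

theorem IntermediateField.map_mulRight_eq_restrictScalars_span {K L : Type*} [Field K] [Field L]
    [Algebra K L] (H : IntermediateField K L) (v : L) :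
    (Subalgebra.toSubmodule H.toSubalgebra).map (LinearMap.mulRight K v) =
      (Submodule.span H {v}).restrictScalars K := by
  ext x
  simp [Submodule.mem_span_singleton, IntermediateField.smul_def]

theorem stmt_11 {K L : Type*} [Field K] [Field L] [Algebra K L]
    (H : IntermediateField K L) (V : Submodule K L) (hV : V ≠ ⊥)
    (hVfin : FiniteDimensional K V)
    (hHV : (H : Set L) * (V : Set L) = (V : Set L)) :
    FiniteDimensional K H ∧ Module.finrank K H ∣ Module.finrank K V ∧
      ∃ R : Finset L, (∀ v ∈ R, v ∈ V ∧ v ≠ 0) ∧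
        iSupIndep (fun v : R =>
          (Subalgebra.toSubmodule H.toSubalgebra).map (LinearMap.mulRight K (v : L))) ∧
        (⨆ v : R, (Subalgebra.toSubmodule H.toSubalgebra).map
          (LinearMap.mulRight K (v : L))) = V := by
  have hmul (h : H) (v : L) (hv : v ∈ V) : h • v ∈ V := by
    rw [← SetLike.mem_coe, ← hHV]
    exact Set.mul_mem_mul h.2 hv
  set W := V.extendScalarsOfSMulMem hmul
  have : Nontrivial W := by
    rw [Submodule.nontrivial_iff_ne_bot, Ne, ← Submodule.restrictScalars_eq_bot_iff K]
    exact hV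
  have : FiniteDimensional K (W.restrictScalars K) := hVfin
  have hH : FiniteDimensional K H := Submodule.finiteDimensional_of_nontrivial W
  have : FiniteDimensional H W := Module.Finite.right K H W
  obtain ⟨R, hR, hRindep, hRsup⟩ := W.exists_finset_iSupIndep_span_singleton
  refine ⟨hH, W.finrank_dvd_finrank_restrictScalars, R, hR, ?_, ?_⟩
  · simp only [IntermediateField.map_mulRight_eq_restrictScalars_span]
    exact Submodule.iSupIndep_restrictScalars hRindep
  · simp only [IntermediateField.map_mulRight_eq_restrictScalars_span,
      ← Submodule.restrictScalars_iSup, hRsup, W, Submodule.restrictScalars_extendScalarsOfSMulMem]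
end

section
/- Let K be a commutative field, L a field extension containing K in its center, and B a finite-dimensional K-subspace of L with 1 ∈ B. For n ≥ 1, the following are equivalent: (1) ⟨B^{n+1}⟩ = ⟨B^n⟩; (2) ⟨B^{2n}⟩ = ⟨B^n⟩; (3) ⟨B^n⟩ is a subfield of L. -/
/-!
Since `1 ∈ B`, the powers `B ^ m` increase, and once `B ^ (n + 1) = B ^ n` the chain is stationary,
so `B ^ (2 * n) = B ^ n`; the latter says that `B ^ n` is closed under multiplication. A
finite-dimensional subspace `V ∋ 1` closed under multiplication is closed under inversion: for
`a ≠ 0` in `V`, left multiplication by `a` is an injective, hence surjective, `K`-linear endomorphism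
of `V`, so `a * x = 1` for some `x ∈ V`. Conversely, if `B ^ n` is closed under multiplication then
`B ^ (n + 1) = B ^ n * B ≤ B ^ n * B ^ n ≤ B ^ n` because `B ≤ B ^ n` for `n ≥ 1`.
-/

theorem pow_add_eq_of_pow_succ_eq {M : Type*} [Monoid M] {x : M} {n : ℕ}
    (h : x ^ (n + 1) = x ^ n) (k : ℕ) : x ^ (n + k) = x ^ n := by
  induction k with
  | zero => rfl
  | succ k ih => rw [← add_assoc, pow_succ, ih, ← pow_succ, h]

namespace Submodule

variable {K L : Type*} [Field K] [DivisionRing L] [Algebra K L]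

theorem inv_mem_of_mul_le_self {V : Submodule K L} [FiniteDimensional K V] (h1 : (1 : L) ∈ V)
    (hV : V * V ≤ V) {a : L} (ha : a ∈ V) : a⁻¹ ∈ V := by
  rcases eq_or_ne a 0 with rfl | ha0
  · rw [inv_zero]
    exact V.zero_mem
  let f : V →ₗ[K] V := (LinearMap.mulLeft K a).restrict fun x hx => hV (mul_mem_mul ha hx)
  have hf : Function.Injective f := fun x y hxy =>
    Subtype.ext (mul_left_cancel₀ ha0 (congrArg Subtype.val hxy))
  obtain ⟨x, hx⟩ := LinearMap.injective_iff_surjective.mp hf ⟨1, h1⟩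
  rw [inv_eq_of_mul_eq_one_right (congrArg Subtype.val hx)]
  exact x.2

theorem finiteDimensional_pow (B : Submodule K L) [FiniteDimensional K B] (n : ℕ) :
    FiniteDimensional K ↥(B ^ n) :=
  Module.Finite.iff_fg.mpr ((Module.Finite.iff_fg.mp ‹_›).pow n)

end Submodule

theorem stmt_13 {K L : Type*} [Field K] [DivisionRing L] [Algebra K L]
    (B : Submodule K L) (hB : FiniteDimensional K B) (h1 : (1 : L) ∈ B)
    (n : ℕ) (hn : 1 ≤ n) :
    List.TFAE [B ^ (n + 1) = B ^ n,
               B ^ (2 * n) = B ^ n,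
               (1 : L) ∈ B ^ n ∧ (∀ a ∈ B ^ n, ∀ b ∈ B ^ n, a * b ∈ B ^ n) ∧
                 (∀ a ∈ B ^ n, a ≠ 0 → a⁻¹ ∈ B ^ n)] := by
  have hB1 : 1 ≤ B := Submodule.one_le.mpr h1
  have := B.finiteDimensional_pow n
  tfae_have 1 → 2 := fun h => by rw [two_mul, pow_add_eq_of_pow_succ_eq h]
  tfae_have 2 → 3 := fun h => by
    have hmul : B ^ n * B ^ n ≤ B ^ n := by rw [← pow_add, ← two_mul, h]
    have hone : (1 : L) ∈ B ^ n := Submodule.one_le.mp (one_le_pow_of_one_le' hB1 n)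
    exact ⟨hone, fun a ha b hb => hmul (Submodule.mul_mem_mul ha hb),
      fun a ha _ => Submodule.inv_mem_of_mul_le_self hone hmul ha⟩
  tfae_have 3 → 1 := fun ⟨_, hmul, _⟩ => by
    refine le_antisymm ?_ (pow_le_pow_right' hB1 n.le_succ)
    rw [pow_succ]
    exact Submodule.mul_le.mpr fun a ha b hb =>
      hmul a ha b (pow_le_pow_right' hB1 hn (by rwa [pow_one]))
  tfae_finish
end

section
/- Let K be a commutative field, L a commutative field extension of K, and B a finite-dimensional K-subspace of L containing 1. Then ⟨B^{n+1}⟩ = ⟨B^n⟩ if and only if ⟨B^n b⟩ = ⟨B^{n+1}⟩ for every nonzero b ∈ B. -/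
open Module

namespace Submodule

theorem map_mulRight_le_mul {R A : Type*} [CommSemiring R] [Semiring A] [Algebra R A]
    (M N : Submodule R A) {b : A} (hb : b ∈ N) : M.map (LinearMap.mulRight R b) ≤ M * N := by
  rintro _ ⟨x, hx, rfl⟩
  exact mul_mem_mul hx hb

theorem finiteDimensional_pow_s19 {K A : Type*} [Field K] [Ring A] [Algebra K A]
    (M : Submodule K A) [FiniteDimensional K M] (n : ℕ) : FiniteDimensional K ↥(M ^ n) :=
  (fg_iff_finiteDimensional _).mp <| ((fg_iff_finiteDimensional M).mpr ‹_›).pow n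

theorem map_eq_of_injective_of_le {K V W : Type*} [DivisionRing K] [AddCommGroup V] [Module K V]
    [AddCommGroup W] [Module K W] {f : V →ₗ[K] W} (hf : Function.Injective f)
    {M : Submodule K V} {N : Submodule K W} [FiniteDimensional K N]
    (hle : M.map f ≤ N) (hrank : finrank K N ≤ finrank K M) : M.map f = N :=
  eq_of_le_of_finrank_le hle <| by rwa [(equivMapOfInjective f hf M).symm.finrank_eq]

theorem map_mulRight_eq_of_mul_eq_self {K A : Type*} [Field K] [Ring A] [IsDomain A]
    [Algebra K A] {M N : Submodule K A} [FiniteDimensional K M] (h : M * N = M)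
    {b : A} (hb : b ∈ N) (hb0 : b ≠ 0) : M.map (LinearMap.mulRight K b) = M :=
  map_eq_of_injective_of_le (mul_left_injective₀ hb0)
    ((map_mulRight_le_mul M N hb).trans h.le) le_rfl

end Submodule

theorem stmt_19 {K L : Type*} [Field K] [Field L] [Algebra K L]
    (B : Submodule K L) (hB : FiniteDimensional K B) (h1 : (1 : L) ∈ B) (n : ℕ) :
    B ^ (n + 1) = B ^ n ↔
      ∀ b ∈ B, b ≠ 0 → (B ^ n).map (LinearMap.mulRight K b) = B ^ (n + 1) := by
  constructor
  · intro h b hb hb0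
    have := B.finiteDimensional_pow_s19 n
    rw [h]
    exact Submodule.map_mulRight_eq_of_mul_eq_self (by rw [← pow_succ, h]) hb hb0
  · intro h
    simpa using (h 1 h1 one_ne_zero).symm
end
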